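/- If Z ~ Gamma(α, β) with α, β > 0, then Var(log Z) = ψ₁(α), the trigamma function evaluated at α. -/

import Mathlib

open MeasureTheory

noncomputable def gammaPDF (α β z : ℝ) : ℝ :=
  z ^ (α - 1) * Real.exp (-z / β) / (Real.Gamma α * β ^ α)

noncomputable def digamma (x : ℝ) : ℝ := deriv (fun y : ℝ => Real.log (Real.Gamma y)) x

noncomputable def trigamma (x : ℝ) : ℝ := deriv digamma x

/-!
Substituting `z = β t` turns `log Z` into `log β + log T` with `T ~ Gamma(α, 1)`, so the variance
does not depend on `β`. Differentiating Euler's integral under the integral sign (as a Mellin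
transform) gives `Γ⁽ᵏ⁾(α) = ∫ (log t)ᵏ t^(α-1) e^(-t) dt`, hence `E[log T] = Γ'/Γ = ψ(α)` and
`E[(log T)²] = Γ''/Γ = ψ'(α) + ψ(α)²`.
-/

open Set Filter Asymptotics Topology Real

noncomputable def logPowMulExpNeg (k : ℕ) (t : ℝ) : ℂ := ((log t ^ k * exp (-t) : ℝ) : ℂ)

noncomputable def logPowGammaIntegral (k : ℕ) (x : ℝ) : ℝ :=
  ∫ t in Ioi 0, log t ^ k * t ^ (x - 1) * exp (-t)

namespace logPowMulExpNeg

lemma log_smul (k : ℕ) : (fun t => log t • logPowMulExpNeg k t) = logPowMulExpNeg (k + 1) := by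
  funext t
  simp only [logPowMulExpNeg, Complex.real_smul, pow_succ]
  push_cast
  ring

lemma locallyIntegrableOn (k : ℕ) : LocallyIntegrableOn (logPowMulExpNeg k) (Ioi 0) := by
  refine ContinuousOn.locallyIntegrableOn ?_ measurableSet_Ioi
  refine Complex.continuous_ofReal.comp_continuousOn ?_
  exact ((continuousOn_log.mono fun t (ht : 0 < t) => ht.ne').pow k).mul
    (continuous_exp.comp continuous_neg).continuousOn

lemma isBigO_atTop (k : ℕ) (a : ℝ) : logPowMulExpNeg k =O[atTop] (· ^ (-a)) := by
  induction k generalizing a with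
  | zero =>
    unfold logPowMulExpNeg
    simpa only [pow_zero, one_mul, neg_one_mul, Complex.isBigO_ofReal_left] using
      (isLittleO_exp_neg_mul_rpow_atTop zero_lt_one (-a)).isBigO
  | succ k ih =>
    rw [← log_smul]
    exact isBigO_rpow_top_log_smul (lt_add_one a) (ih (a + 1))

lemma isBigO_nhdsGT_zero (k : ℕ) {b : ℝ} (hb : 0 < b) :
    logPowMulExpNeg k =O[𝓝[>] 0] (· ^ (-b)) := by
  induction k generalizing b with
  | zero =>
    have hcont : Continuous (logPowMulExpNeg 0) := by
      unfold logPowMulExpNeg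
      simp only [pow_zero, one_mul]
      fun_prop
    have hbdd : logPowMulExpNeg 0 =O[𝓝[>] 0] fun _ => (1 : ℝ) :=
      isBigO_const_of_tendsto ((hcont.tendsto 0).mono_left nhdsWithin_le_nhds) one_ne_zero
    refine hbdd.trans_isLittleO ((isLittleO_const_left_of_ne one_ne_zero).2 ?_) |>.isBigO
    exact tendsto_norm_atTop_atTop.comp (tendsto_rpow_neg_nhdsGT_zero (neg_neg_of_pos hb))
  | succ k ih =>
    rw [← log_smul]
    exact isBigO_rpow_zero_log_smul (half_lt_self hb) (ih (half_pos hb))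

lemma mellinConvergent (k : ℕ) {x : ℝ} (hx : 0 < x) : MellinConvergent (logPowMulExpNeg k) x :=
  mellinConvergent_of_isBigO_rpow (locallyIntegrableOn k) (isBigO_atTop k (x + 1))
    (by simp) (isBigO_nhdsGT_zero k (half_pos hx)) (by simpa using half_lt_self hx)

lemma hasDerivAt_mellin (k : ℕ) {x : ℝ} (hx : 0 < x) :
    HasDerivAt (mellin (logPowMulExpNeg k)) (mellin (logPowMulExpNeg (k + 1)) x) x := by
  rw [← log_smul]
  exact (mellin_hasDerivAt_of_isBigO_rpow (locallyIntegrableOn k) (isBigO_atTop k (x + 1))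
    (by simp) (isBigO_nhdsGT_zero k (half_pos hx)) (by simpa using half_lt_self hx)).2

lemma cpow_smul {x t : ℝ} (k : ℕ) (ht : 0 < t) :
    (t : ℂ) ^ ((x : ℂ) - 1) • logPowMulExpNeg k t =
      ((log t ^ k * t ^ (x - 1) * exp (-t) : ℝ) : ℂ) := by
  rw [show (x : ℂ) - 1 = ((x - 1 : ℝ) : ℂ) by push_cast; ring, ← Complex.ofReal_cpow ht.le]
  simp only [logPowMulExpNeg, smul_eq_mul]
  push_cast
  ring

lemma mellin_ofReal (k : ℕ) (x : ℝ) :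
    mellin (logPowMulExpNeg k) x = (logPowGammaIntegral k x : ℂ) := by
  rw [mellin, setIntegral_congr_fun measurableSet_Ioi fun t ht => cpow_smul k ht]
  exact integral_ofReal

end logPowMulExpNeg

open logPowMulExpNeg

lemma integrableOn_logPowGammaIntegral (k : ℕ) {x : ℝ} (hx : 0 < x) :
    IntegrableOn (fun t => log t ^ k * t ^ (x - 1) * exp (-t)) (Ioi 0) := by
  refine (mellinConvergent k hx).re.congr ?_
  filter_upwards [ae_restrict_mem measurableSet_Ioi] with t ht
  rw [cpow_smul k ht]
  exact RCLike.ofReal_re _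

lemma hasDerivAt_logPowGammaIntegral (k : ℕ) {x : ℝ} (hx : 0 < x) :
    HasDerivAt (logPowGammaIntegral k) (logPowGammaIntegral (k + 1) x) x := by
  have h := (hasDerivAt_mellin k hx).real_of_complex
  simpa only [mellin_ofReal, Complex.ofReal_re] using h

lemma logPowGammaIntegral_zero {x : ℝ} (hx : 0 < x) : logPowGammaIntegral 0 x = Gamma x := by
  rw [Gamma_eq_integral hx, logPowGammaIntegral]
  refine setIntegral_congr_fun measurableSet_Ioi fun t _ => ?_
  simp only [pow_zero, one_mul, mul_comm]

lemma hasDerivAt_Gamma_eq_logPowGammaIntegral {x : ℝ} (hx : 0 < x) :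
    HasDerivAt Gamma (logPowGammaIntegral 1 x) x :=
  (hasDerivAt_logPowGammaIntegral 0 hx).congr_of_eventuallyEq <| by
    filter_upwards [Ioi_mem_nhds hx] with y hy using (logPowGammaIntegral_zero hy).symm

lemma digamma_eq_div {x : ℝ} (hx : 0 < x) : digamma x = logPowGammaIntegral 1 x / Gamma x :=
  ((hasDerivAt_Gamma_eq_logPowGammaIntegral hx).log (Gamma_pos_of_pos hx).ne').deriv

lemma trigamma_eq {x : ℝ} (hx : 0 < x) :
    trigamma x = logPowGammaIntegral 2 x / Gamma x - digamma x ^ 2 := by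
  have hΓ := (Gamma_pos_of_pos hx).ne'
  have hquot := (hasDerivAt_logPowGammaIntegral 1 hx).div
    (hasDerivAt_Gamma_eq_logPowGammaIntegral hx) hΓ
  have hdigamma : HasDerivAt digamma _ x := hquot.congr_of_eventuallyEq <| by
    filter_upwards [Ioi_mem_nhds hx] with y hy using digamma_eq_div hy
  rw [trigamma, hdigamma.deriv, digamma_eq_div hx]
  field_simp

lemma log_pow_mul_gammaPDF_one (α t : ℝ) (k : ℕ) :
    log t ^ k * gammaPDF α 1 t = log t ^ k * t ^ (α - 1) * exp (-t) / Gamma α := by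
  simp only [gammaPDF, div_one, one_rpow, mul_one]
  ring

lemma integrableOn_log_pow_mul_gammaPDF_one (k : ℕ) {α : ℝ} (hα : 0 < α) :
    IntegrableOn (fun t => log t ^ k * gammaPDF α 1 t) (Ioi 0) := by
  simp only [log_pow_mul_gammaPDF_one]
  exact (integrableOn_logPowGammaIntegral k hα).div_const _

lemma integral_log_pow_mul_gammaPDF_one (k : ℕ) (α : ℝ) :
    ∫ t in Ioi 0, log t ^ k * gammaPDF α 1 t = logPowGammaIntegral k α / Gamma α := by
  simp only [log_pow_mul_gammaPDF_one, integral_div, logPowGammaIntegral]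

lemma gammaPDF_scale (α : ℝ) {β t : ℝ} (hβ : 0 < β) (ht : 0 ≤ t) :
    β * gammaPDF α β (β * t) = gammaPDF α 1 t := by
  have hβα : β ^ α = β ^ (α - 1) * β := by
    rw [← rpow_add_one hβ.ne', sub_add_cancel]
  simp only [gammaPDF, mul_rpow hβ.le ht, hβα, one_rpow, div_one, neg_div,
    mul_div_cancel_left₀ t hβ.ne']
  field_simp

lemma setIntegral_comp_log_mul_gammaPDF (f : ℝ → ℝ) (α : ℝ) {β : ℝ} (hβ : 0 < β) :
    ∫ z in Ioi 0, f (log z) * gammaPDF α β z =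
      ∫ t in Ioi 0, f (log β + log t) * gammaPDF α 1 t := by
  have hsubst := integral_comp_mul_left_Ioi' (fun z => f (log z) * gammaPDF α β z) 0 hβ
  rw [mul_zero] at hsubst
  rw [← hsubst, smul_eq_mul, ← integral_const_mul]
  refine setIntegral_congr_fun measurableSet_Ioi fun t (ht : 0 < t) => ?_
  rw [log_mul hβ.ne' ht.ne', ← gammaPDF_scale α hβ ht.le]
  ring

lemma integral_log_pow_mul_gammaPDF (n : ℕ) {α β : ℝ} (hα : 0 < α) (hβ : 0 < β) :
    ∫ z in Ioi 0, log z ^ n * gammaPDF α β z =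
      ∑ j ∈ Finset.range (n + 1),
        log β ^ (n - j) * n.choose j * (logPowGammaIntegral j α / Gamma α) := by
  have hexpand : ∀ t, (log β + log t) ^ n * gammaPDF α 1 t =
      ∑ j ∈ Finset.range (n + 1),
        log β ^ (n - j) * n.choose j * (log t ^ j * gammaPDF α 1 t) := by
    intro t
    rw [add_comm, add_pow, Finset.sum_mul]
    exact Finset.sum_congr rfl fun j _ => by ring
  rw [setIntegral_comp_log_mul_gammaPDF (· ^ n) α hβ]
  simp_rw [hexpand]
  rw [integral_finsetSum _ fun j _ => (integrableOn_log_pow_mul_gammaPDF_one j hα).const_mul _]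
  simp only [integral_const_mul, integral_log_pow_mul_gammaPDF_one]

lemma integral_log_mul_gammaPDF {α β : ℝ} (hα : 0 < α) (hβ : 0 < β) :
    ∫ z in Ioi 0, log z * gammaPDF α β z = log β + digamma α := by
  have hΓ := (Gamma_pos_of_pos hα).ne'
  simpa [Finset.sum_range_succ, logPowGammaIntegral_zero hα, hΓ, digamma_eq_div hα] using
    integral_log_pow_mul_gammaPDF 1 hα hβ

lemma integral_log_sq_mul_gammaPDF {α β : ℝ} (hα : 0 < α) (hβ : 0 < β) :
    ∫ z in Ioi 0, log z ^ 2 * gammaPDF α β z = (log β + digamma α) ^ 2 + trigamma α := by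
  have hΓ := (Gamma_pos_of_pos hα).ne'
  rw [integral_log_pow_mul_gammaPDF 2 hα hβ, trigamma_eq hα, digamma_eq_div hα]
  simp only [Finset.sum_range_succ, Finset.sum_range_zero, logPowGammaIntegral_zero hα,
    div_self hΓ]
  norm_num
  ring

theorem gamma_var_log (α β : ℝ) (hα : 0 < α) (hβ : 0 < β) :
    (∫ z in Set.Ioi (0 : ℝ), Real.log z ^ 2 * gammaPDF α β z) -
      (∫ z in Set.Ioi (0 : ℝ), Real.log z * gammaPDF α β z) ^ 2 = trigamma α := by
  rw [integral_log_sq_mul_gammaPDF hα hβ, integral_log_mul_gammaPDF hα hβ]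
  ring
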